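/- arXiv:2309.16475 — 3 statements merged into one kernel-verified Lean document; each statement's English description precedes it below -/
import Mathlib

section
/- Let h_U = Λ^{⊗4}(I − |Φ_U⟩⟨Φ_U|)Λ^{⊗4} be an 8-qubit operator where Λ = δ|Φ_I⟩⟨Φ_I| + Σ_{p∈{X,XZ,Z}}|Φ_p⟩⟨Φ_p| with 0 < δ < 1 and |Φ_U⟩ is a unit vector. Then h_U² ⪰ δ⁸ h_U; in particular every nonzero eigenvalue of h_U is at least δ⁸, i.e., h_U has spectral gap at least δ⁸ above its kernel. -/
open Matrix Complex Kronecker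
open scoped ComplexOrder

noncomputable section

def σX : Matrix (Fin 2) (Fin 2) ℂ := !![0, 1; 1, 0]
def σZ : Matrix (Fin 2) (Fin 2) ℂ := !![1, 0; 0, -1]

/-- The Pauli family 𝒫 = {I, X, XZ, Z}. -/
def Pauli : Fin 4 → Matrix (Fin 2) (Fin 2) ℂ := ![1, σX, σX * σZ, σZ]

/-- weight: 0 for the identity, 1 for a nontrivial Pauli. -/
def pwt : Fin 4 → ℕ := ![0, 1, 1, 1]

/-- The Bell state |Φ_I⟩ = (|00⟩+|11⟩)/√2 as a vector on two qubits. -/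
def bell : Fin 2 × Fin 2 → ℂ := fun p => if p.1 = p.2 then ((1 / Real.sqrt 2 : ℝ) : ℂ) else 0

/-- |Φ_A⟩ = (I ⊗ A)|Φ_I⟩. -/
def bellOf (A : Matrix (Fin 2) (Fin 2) ℂ) : Fin 2 × Fin 2 → ℂ :=
  fun p => ∑ k, A p.2 k * bell (p.1, k)

/-- Outer product |u⟩⟨v|. -/
def outer {α : Type*} (u v : α → ℂ) : Matrix α α ℂ :=
  Matrix.of fun i j => u i * star (v j)

/-- Λ = δ|Φ_I⟩⟨Φ_I| + Σ_{p∈{X,XZ,Z}} |Φ_p⟩⟨Φ_p|. -/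
def Lam (δ : ℝ) : Matrix (Fin 2 × Fin 2) (Fin 2 × Fin 2) ℂ :=
  (δ : ℂ) • outer (bellOf 1) (bellOf 1) +
    ∑ i ∈ ({1, 2, 3} : Finset (Fin 4)), outer (bellOf (Pauli i)) (bellOf (Pauli i))

/-- Index type of eight qubits, grouped into four pairs. -/
abbrev V8 := ((Fin 2 × Fin 2) × (Fin 2 × Fin 2)) × ((Fin 2 × Fin 2) × (Fin 2 × Fin 2))

/-- Λ^{⊗4} acting on four disjoint qubit pairs. -/
def Lam4 (δ : ℝ) : Matrix V8 V8 ℂ := (Lam δ ⊗ₖ Lam δ) ⊗ₖ (Lam δ ⊗ₖ Lam δ)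

/-- h_U = Λ^{⊗4}(I − |Φ_U⟩⟨Φ_U|)Λ^{⊗4} for a unit vector |Φ_U⟩ on eight qubits. -/
def hU8 (δ : ℝ) (ΦU : V8 → ℂ) : Matrix V8 V8 ℂ :=
  Lam4 δ * (1 - outer ΦU ΦU) * Lam4 δ

/-! Write `Q = |Φ_I⟩⟨Φ_I|`. Completeness of the Bell basis gives `Λ = δ Q + (1 - Q)`, hence
`Λ² - δ² = (1 - δ²)(1 - Q) ⪰ 0`, and `A ⪰ a`, `B ⪰ b` imply `A ⊗ B ⪰ a b`, so `L := Λ^{⊗4}`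
satisfies `L² ⪰ δ⁸`. For the projection `P = 1 - |Φ_U⟩⟨Φ_U|` and Hermitian `L`,
`(LPL)² - c LPL = (PL)ᴴ (L² - c) (PL)`, which gives `h_U² ⪰ δ⁸ h_U`. On an eigenvector with
eigenvalue `μ ≠ 0` this reads `μ (μ - δ⁸) ≥ 0`, and `μ > 0` because `h_U = (PL)ᴴ (PL) ⪰ 0`. -/

theorem Matrix.IsHermitian.kronecker {R n m : Type*} [CommSemiring R] [StarRing R]
    {A : Matrix n n R} {B : Matrix m m R} (hA : A.IsHermitian) (hB : B.IsHermitian) :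
    (A ⊗ₖ B).IsHermitian := by
  rw [IsHermitian, conjTranspose_kronecker, hA.eq, hB.eq]

section

variable {𝕜 n m : Type*} [RCLike 𝕜] [Fintype n] [Fintype m]

theorem IsStarProjection.posSemidef {P : Matrix n n 𝕜} (hP : IsStarProjection P) :
    P.PosSemidef := by
  have h : Pᴴ * P = P := by
    rw [← star_eq_conjTranspose, hP.isSelfAdjoint.star_eq, hP.isIdempotentElem.eq]
  exact h ▸ posSemidef_conjTranspose_mul_self P

theorem IsStarProjection.posSemidef_mul_mul {P L : Matrix n n 𝕜}
    (hP : IsStarProjection P) (hL : L.IsHermitian) : (L * P * L).PosSemidef := by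
  have h : (P * L)ᴴ * (P * L) = L * P * L := by
    rw [conjTranspose_mul, hL.eq, ← star_eq_conjTranspose, hP.isSelfAdjoint.star_eq,
      Matrix.mul_assoc, ← Matrix.mul_assoc P, hP.isIdempotentElem.eq, Matrix.mul_assoc]
  exact h ▸ posSemidef_conjTranspose_mul_self (P * L)

theorem IsStarProjection.posSemidef_mul_mul_sq_sub_smul [DecidableEq n] {P L : Matrix n n 𝕜}
    {c : 𝕜} (hP : IsStarProjection P) (hL : L.IsHermitian) (hLc : (L * L - c • 1).PosSemidef) :
    ((L * P * L) * (L * P * L) - c • (L * P * L)).PosSemidef := by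
  have hPP : ∀ X, P * (P * X) = P * X := fun X => by
    rw [← Matrix.mul_assoc, hP.isIdempotentElem.eq]
  have h : (P * L)ᴴ * (L * L - c • 1) * (P * L) =
      (L * P * L) * (L * P * L) - c • (L * P * L) := by
    rw [conjTranspose_mul, hL.eq, ← star_eq_conjTranspose, hP.isSelfAdjoint.star_eq]
    simp only [Matrix.mul_sub, Matrix.sub_mul, Matrix.mul_smul, Matrix.smul_mul, Matrix.mul_one,
      Matrix.mul_assoc, hPP]
  exact h ▸ hLc.conjTranspose_mul_mul_same (P * L)

theorem Matrix.PosSemidef.kronecker_sub_smul_one [DecidableEq n] [DecidableEq m]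
    {A : Matrix n n 𝕜} {B : Matrix m m 𝕜} {a b : 𝕜} (hA : (A - a • 1).PosSemidef)
    (hB : (B - b • 1).PosSemidef) (ha : 0 ≤ a) (hb : 0 ≤ b) :
    (A ⊗ₖ B - (a * b) • 1).PosSemidef := by
  have hB' : B.PosSemidef := by simpa using hB.add (PosSemidef.one.smul hb)
  have h : A ⊗ₖ B - (a * b) • 1 = (A - a • 1) ⊗ₖ B + a • ((1 : Matrix n n 𝕜) ⊗ₖ (B - b • 1)) := by
    rw [sub_eq_add_neg A, sub_eq_add_neg B, ← neg_smul, ← neg_smul, add_kronecker, kronecker_add,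
      smul_kronecker, kronecker_smul, one_kronecker_one]
    module
  rw [h]
  exact (hA.kronecker hB').add ((PosSemidef.one.kronecker hB).smul ha)

theorem Matrix.PosSemidef.nonneg_of_mulVec_eq_smul {A : Matrix n n 𝕜} (hA : A.PosSemidef)
    {v : n → 𝕜} (hv : v ≠ 0) {r : 𝕜} (hr : A *ᵥ v = r • v) : 0 ≤ r := by
  have h := hA.dotProduct_mulVec_nonneg v
  rw [hr, dotProduct_smul, smul_eq_mul, ← zero_mul (star v ⬝ᵥ v)] at h
  exact le_of_mul_le_mul_right h (dotProduct_star_self_pos_iff.mpr hv)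

theorem Matrix.PosSemidef.le_of_mul_self_sub_smul_of_mulVec_eq_smul {A : Matrix n n 𝕜} {c μ : ℝ}
    (hA : A.PosSemidef) (hAc : (A * A - (c : 𝕜) • A).PosSemidef) {v : n → 𝕜} (hv : v ≠ 0)
    (hμ : A *ᵥ v = (μ : 𝕜) • v) (hμ0 : μ ≠ 0) : c ≤ μ := by
  have hμpos : 0 < μ :=
    (RCLike.ofReal_nonneg.mp (hA.nonneg_of_mulVec_eq_smul hv hμ)).lt_of_ne' hμ0
  have hAcv : (A * A - (c : 𝕜) • A) *ᵥ v = ((μ * (μ - c) : ℝ) : 𝕜) • v := by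
    rw [sub_mulVec, ← mulVec_mulVec, smul_mulVec, hμ, mulVec_smul, hμ]
    push_cast
    module
  have := RCLike.ofReal_nonneg.mp (hAc.nonneg_of_mulVec_eq_smul hv hAcv)
  nlinarith

theorem IsStarProjection.posSemidef_mul_self_sub_smul_one [DecidableEq n] {Q : Matrix n n 𝕜}
    (hQ : IsStarProjection Q) {d : 𝕜} (hd : 0 ≤ 1 - d ^ 2) :
    ((d • Q + (1 - Q)) * (d • Q + (1 - Q)) - d ^ 2 • 1).PosSemidef := by
  have hQQ := hQ.isIdempotentElem.eq
  have h : (d • Q + (1 - Q)) * (d • Q + (1 - Q)) - d ^ 2 • 1 = (1 - d ^ 2) • (1 - Q) := by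
    simp only [Matrix.add_mul, Matrix.mul_add, Matrix.sub_mul, Matrix.mul_sub, Matrix.smul_mul,
      Matrix.mul_smul, Matrix.one_mul, Matrix.mul_one, hQQ]
    module
  rw [h]
  exact hQ.one_sub.posSemidef.smul hd

end

theorem outer_eq_vecMulVec {α : Type*} (u v : α → ℂ) : outer u v = vecMulVec u (star v) := rfl

theorem isStarProjection_outer_self {α : Type*} [Fintype α] {u : α → ℂ}
    (hu : star u ⬝ᵥ u = 1) : IsStarProjection (outer u u) where
  isIdempotentElem := by
    rw [IsIdempotentElem, outer_eq_vecMulVec, vecMulVec_mul_vecMulVec, hu, one_smul]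
  isSelfAdjoint := by
    rw [IsSelfAdjoint, outer_eq_vecMulVec, star_eq_conjTranspose, conjTranspose_vecMulVec,
      star_star]

theorem bellOf_apply (A : Matrix (Fin 2) (Fin 2) ℂ) (p : Fin 2 × Fin 2) :
    bellOf A p = A p.2 p.1 / Real.sqrt 2 := by
  obtain ⟨i, j⟩ := p
  fin_cases i <;> simp [bellOf, bell, div_eq_mul_inv]

theorem outer_bellOf_apply (A : Matrix (Fin 2) (Fin 2) ℂ) (p q : Fin 2 × Fin 2) :
    outer (bellOf A) (bellOf A) p q = A p.2 p.1 * star (A q.2 q.1) / 2 := by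
  have h : (Real.sqrt 2 : ℂ) * Real.sqrt 2 = 2 := by
    rw [← Complex.ofReal_mul, Real.mul_self_sqrt zero_le_two, Complex.ofReal_ofNat]
  simp only [outer, of_apply, bellOf_apply, star_div₀, Complex.star_def, Complex.conj_ofReal]
  rw [div_mul_div_comm, h]

theorem sum_outer_bellOf_pauli : ∑ i, outer (bellOf (Pauli i)) (bellOf (Pauli i)) = 1 := by
  ext ⟨a, b⟩ ⟨c, d⟩
  simp only [Matrix.sum_apply, outer_bellOf_apply, ← Finset.sum_div, Fin.sum_univ_four]
  fin_cases a <;> fin_cases b <;> fin_cases c <;> fin_cases d <;> simp [Pauli, σX, σZ]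

theorem star_bellOf_one_dotProduct_self : star (bellOf 1) ⬝ᵥ bellOf 1 = 1 :=
  calc star (bellOf 1) ⬝ᵥ bellOf 1 = ∑ p, outer (bellOf 1) (bellOf 1) p p := by
        simp only [dotProduct, outer, of_apply, Pi.star_apply, mul_comm]
    _ = 1 := by norm_num [outer_bellOf_apply, Fintype.sum_prod_type]

theorem isStarProjection_outer_bellOf_one : IsStarProjection (outer (bellOf 1) (bellOf 1)) :=
  isStarProjection_outer_self star_bellOf_one_dotProduct_self

theorem Lam_eq (δ : ℝ) :
    Lam δ = (δ : ℂ) • outer (bellOf 1) (bellOf 1) + (1 - outer (bellOf 1) (bellOf 1)) := by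
  have h : ∑ i ∈ ({1, 2, 3} : Finset (Fin 4)), outer (bellOf (Pauli i)) (bellOf (Pauli i)) =
      1 - outer (bellOf 1) (bellOf 1) := by
    rw [eq_sub_iff_add_eq', ← sum_outer_bellOf_pauli,
      ← Finset.add_sum_erase _ _ (Finset.mem_univ (0 : Fin 4))]
    rfl
  rw [Lam, h]

theorem Lam_isHermitian (δ : ℝ) : (Lam δ).IsHermitian := by
  have hQ := isStarProjection_outer_bellOf_one.isSelfAdjoint
  rw [Lam_eq, IsHermitian, conjTranspose_add, conjTranspose_smul, conjTranspose_sub,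
    conjTranspose_one, ← star_eq_conjTranspose, hQ.star_eq, Complex.star_def, Complex.conj_ofReal]

theorem Lam4_isHermitian (δ : ℝ) : (Lam4 δ).IsHermitian :=
  ((Lam_isHermitian δ).kronecker (Lam_isHermitian δ)).kronecker
    ((Lam_isHermitian δ).kronecker (Lam_isHermitian δ))

theorem posSemidef_Lam_mul_self_sub_smul_one {δ : ℝ} (hδ : δ ^ 2 ≤ 1) :
    (Lam δ * Lam δ - ((δ ^ 2 : ℝ) : ℂ) • 1).PosSemidef := by
  rw [Lam_eq, Complex.ofReal_pow]
  exact isStarProjection_outer_bellOf_one.posSemidef_mul_self_sub_smul_one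
    (by exact_mod_cast sub_nonneg.mpr hδ)

theorem posSemidef_Lam4_mul_self_sub_smul_one {δ : ℝ} (hδ : δ ^ 2 ≤ 1) :
    (Lam4 δ * Lam4 δ - ((δ ^ 8 : ℝ) : ℂ) • 1).PosSemidef := by
  have hsq : (0 : ℂ) ≤ ((δ ^ 2 : ℝ) : ℂ) := Complex.zero_le_real.mpr (sq_nonneg δ)
  have h2 := (posSemidef_Lam_mul_self_sub_smul_one hδ).kronecker_sub_smul_one
    (posSemidef_Lam_mul_self_sub_smul_one hδ) hsq hsq
  have h4 := h2.kronecker_sub_smul_one h2 (mul_nonneg hsq hsq) (mul_nonneg hsq hsq)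
  have h8 : ((δ ^ 2 : ℝ) : ℂ) * ((δ ^ 2 : ℝ) : ℂ) * (((δ ^ 2 : ℝ) : ℂ) * ((δ ^ 2 : ℝ) : ℂ)) =
      ((δ ^ 8 : ℝ) : ℂ) := by
    push_cast; ring
  rw [Lam4, ← mul_kronecker_mul, ← mul_kronecker_mul, ← h8]
  exact h4

/-- h_U² ⪰ δ⁸ h_U, hence every nonzero eigenvalue of h_U is at least δ⁸. -/
theorem spectral_gap_of_hU (δ : ℝ) (hδ0 : 0 < δ) (hδ1 : δ < 1)
    (ΦU : V8 → ℂ) (hΦ : star ΦU ⬝ᵥ ΦU = 1) :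
    (hU8 δ ΦU * hU8 δ ΦU - ((δ ^ 8 : ℝ) : ℂ) • hU8 δ ΦU).PosSemidef ∧
      ∀ (c : ℝ) (v : V8 → ℂ), v ≠ 0 → (hU8 δ ΦU).mulVec v = (c : ℂ) • v → c ≠ 0 →
        δ ^ 8 ≤ c := by
  have hδ : δ ^ 2 ≤ 1 := by nlinarith
  have hP : IsStarProjection (1 - outer ΦU ΦU) := (isStarProjection_outer_self hΦ).one_sub
  have hgap : (hU8 δ ΦU * hU8 δ ΦU - ((δ ^ 8 : ℝ) : ℂ) • hU8 δ ΦU).PosSemidef :=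
    hP.posSemidef_mul_mul_sq_sub_smul (Lam4_isHermitian δ)
      (posSemidef_Lam4_mul_self_sub_smul_one hδ)
  refine ⟨hgap, fun c v hv hcv hc => ?_⟩
  exact (hP.posSemidef_mul_mul (Lam4_isHermitian δ)).le_of_mul_self_sub_smul_of_mulVec_eq_smul
    hgap hv hcv hc

end
end

section
/- Let {Q₁, …, Q_m} be orthogonal projectors on a finite-dimensional Hilbert space and H = Σᵢ Qᵢ. For any unit vector |ψ⟩, define |φ⟩ = (I−Q_m)⋯(I−Q₁)|ψ⟩. Then ‖φ‖² ≥ 1 − 4⟨ψ|H|ψ⟩. -/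
/-!
Let `x₀ = ψ`, `x_{k+1} = (1 - Q_k) x_k` and `q_k = Q_k x_k`. Each step splits `x_k` orthogonally
into `x_{k+1}` and `q_k`, so `S := ‖ψ‖² - ‖x_m‖² = ∑ ‖q_k‖²`, and telescoping gives
`ψ - x_m = ∑ q_k`. Since `2 Re⟪ψ, ψ - x_m⟫ - S = ‖ψ - x_m‖² ≥ 0`,
`S ≤ 2 ∑ Re⟪Q_k ψ, q_k⟫ ≤ 2 √ε √S` by Cauchy–Schwarz twice, where `ε = ∑ ‖Q_k ψ‖² = ⟪ψ, H ψ⟫`.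
Hence `S ≤ 4 ε`.
-/

open Matrix Complex

noncomputable section

/-- The ordered product (I−Q_{m-1})⋯(I−Q₀) of the complements of the projectors. -/
def dlOp {d m : ℕ} (Q : Fin m → Matrix (Fin d) (Fin d) ℂ) : Matrix (Fin d) (Fin d) ℂ :=
  ((List.ofFn fun i : Fin m => (1 : Matrix (Fin d) (Fin d) ℂ) - Q i).reverse).prod

namespace LinearMap.IsSymmetricProjection

variable {𝕜 E : Type*} [RCLike 𝕜] [SeminormedAddCommGroup E] [InnerProductSpace 𝕜 E]
  {T : E →ₗ[𝕜] E}

theorem inner_apply_apply (hT : T.IsSymmetricProjection) (u v : E) :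
    inner 𝕜 (T u) (T v) = inner 𝕜 u (T v) := by
  rw [hT.isSymmetric, ← Module.End.mul_apply, hT.isIdempotentElem.eq]

theorem norm_sub_apply_sq_add_norm_apply_sq (hT : T.IsSymmetricProjection) (v : E) :
    ‖v - T v‖ ^ 2 + ‖T v‖ ^ 2 = ‖v‖ ^ 2 := by
  have horth : inner 𝕜 (v - T v) (T v) = 0 := by
    rw [inner_sub_left, hT.inner_apply_apply, sub_self]
  simpa only [sq, sub_add_cancel] using
    (norm_add_sq_eq_norm_sq_add_norm_sq_of_inner_eq_zero _ _ horth).symm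

theorem re_inner_apply_eq_norm_apply_sq (hT : T.IsSymmetricProjection) (v : E) :
    RCLike.re (inner 𝕜 v (T v)) = ‖T v‖ ^ 2 := by
  rw [← hT.inner_apply_apply, inner_self_eq_norm_sq]

end LinearMap.IsSymmetricProjection

section SeqResidual

variable {R M : Type*} [Ring R] [AddCommGroup M] [Module R M]

def seqResidual (Q : ℕ → M →ₗ[R] M) (ψ : M) : ℕ → M
  | 0 => ψ
  | k + 1 => seqResidual Q ψ k - Q k (seqResidual Q ψ k)

theorem sub_seqResidual_eq_sum (Q : ℕ → M →ₗ[R] M) (ψ : M) (k : ℕ) :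
    ψ - seqResidual Q ψ k = ∑ j ∈ Finset.range k, Q j (seqResidual Q ψ j) := by
  induction k with
  | zero => simp [seqResidual]
  | succ k ih => rw [Finset.sum_range_succ, ← ih, seqResidual]; abel

end SeqResidual

theorem le_four_mul_of_le_two_mul_sqrt_mul_sqrt {s e : ℝ} (he : 0 ≤ e)
    (h : s ≤ 2 * (√e * √s)) : s ≤ 4 * e := by
  rcases le_or_gt s 0 with hs | hs
  · linarith
  have hsqrt : √s ≤ 2 * √e := by
    have := Real.sqrt_pos.2 hs
    nlinarith [Real.mul_self_sqrt hs.le]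
  nlinarith [Real.sq_sqrt hs.le, Real.sq_sqrt he, Real.sqrt_nonneg s]

section QuantumUnionBound

variable {𝕜 E : Type*} [RCLike 𝕜] [SeminormedAddCommGroup E] [InnerProductSpace 𝕜 E]
  {Q : ℕ → E →ₗ[𝕜] E}

theorem norm_seqResidual_sq_add_sum (hQ : ∀ j, (Q j).IsSymmetricProjection) (ψ : E) (k : ℕ) :
    ‖seqResidual Q ψ k‖ ^ 2 + ∑ j ∈ Finset.range k, ‖Q j (seqResidual Q ψ j)‖ ^ 2 = ‖ψ‖ ^ 2 := by
  induction k with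
  | zero => simp [seqResidual]
  | succ k ih =>
    rw [Finset.sum_range_succ, seqResidual, ← add_assoc, add_right_comm,
      (hQ k).norm_sub_apply_sq_add_norm_apply_sq, ih]

theorem re_inner_sub_seqResidual_le (hQ : ∀ j, (Q j).IsSymmetricProjection) (ψ : E) (k : ℕ) :
    RCLike.re (inner 𝕜 ψ (ψ - seqResidual Q ψ k)) ≤
      √(∑ j ∈ Finset.range k, ‖Q j ψ‖ ^ 2) *
        √(∑ j ∈ Finset.range k, ‖Q j (seqResidual Q ψ j)‖ ^ 2) := by
  rw [sub_seqResidual_eq_sum, inner_sum, map_sum]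
  refine (Finset.sum_le_sum fun j _ => ?_).trans (Real.sum_mul_le_sqrt_mul_sqrt _ _ _)
  rw [← (hQ j).inner_apply_apply]
  exact re_inner_le_norm _ _

theorem norm_sq_sub_four_mul_re_inner_le_norm_seqResidual_sq
    (hQ : ∀ j, (Q j).IsSymmetricProjection) (ψ : E) (k : ℕ) :
    ‖ψ‖ ^ 2 - 4 * RCLike.re (inner 𝕜 ψ ((∑ j ∈ Finset.range k, Q j) ψ)) ≤
      ‖seqResidual Q ψ k‖ ^ 2 := by
  set φ := seqResidual Q ψ k
  set S := ∑ j ∈ Finset.range k, ‖Q j (seqResidual Q ψ j)‖ ^ 2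
  set ε := ∑ j ∈ Finset.range k, ‖Q j ψ‖ ^ 2
  have hS : ‖ψ‖ ^ 2 - ‖φ‖ ^ 2 = S := by
    rw [← norm_seqResidual_sq_add_sum hQ ψ k]; ring
  have hε : RCLike.re (inner 𝕜 ψ ((∑ j ∈ Finset.range k, Q j) ψ)) = ε := by
    simp only [LinearMap.sum_apply, inner_sum, map_sum, (hQ _).re_inner_apply_eq_norm_apply_sq, ε]
  have hSr : S ≤ 2 * RCLike.re (inner 𝕜 ψ (ψ - φ)) := by
    have := norm_sub_sq (𝕜 := 𝕜) ψ φ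
    rw [inner_sub_right, map_sub, inner_self_eq_norm_sq]
    linarith [sq_nonneg ‖ψ - φ‖]
  have hSε : S ≤ 4 * ε :=
    le_four_mul_of_le_two_mul_sqrt_mul_sqrt (Finset.sum_nonneg fun _ _ => sq_nonneg _)
      (by linarith [re_inner_sub_seqResidual_le hQ ψ k])
  linarith

end QuantumUnionBound

namespace Matrix

variable {𝕜 n : Type*} [RCLike 𝕜] [Fintype n]

theorem star_dotProduct_eq_inner_toLp (x y : n → 𝕜) :
    star x ⬝ᵥ y = inner 𝕜 (WithLp.toLp 2 x) (WithLp.toLp 2 y) := by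
  rw [EuclideanSpace.inner_toLp_toLp, dotProduct_comm]

variable [DecidableEq n]

theorem isSymmetricProjection_toEuclideanLin {A : Matrix n n 𝕜} (hA₁ : IsIdempotentElem A)
    (hA₂ : A.IsHermitian) : (toEuclideanLin A).IsSymmetricProjection where
  isIdempotentElem := hA₁.map (toLpLinAlgEquiv 2)
  isSymmetric := isSymmetric_toEuclideanLin_iff.2 hA₂

theorem toLp_list_prod_mulVec_eq_seqResidual (f : ℕ → Matrix n n 𝕜) (ψ : n → 𝕜) (k : ℕ) :
    WithLp.toLp 2 (((List.range k).map fun j => 1 - f j).reverse.prod *ᵥ ψ) =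
      seqResidual (fun j => toEuclideanLin (f j)) (WithLp.toLp 2 ψ) k := by
  induction k with
  | zero => simp [seqResidual]
  | succ k ih =>
    rw [List.range_succ, List.map_append, List.reverse_append, List.map_singleton,
      List.reverse_singleton, List.singleton_append, List.prod_cons, ← mulVec_mulVec,
      sub_mulVec, one_mulVec, seqResidual, ← ih, WithLp.toLp_sub, toLpLin_toLp, toLin'_apply]

end Matrix

theorem dlOp_eq_list_prod_range {d m : ℕ} (Q : Fin m → Matrix (Fin d) (Fin d) ℂ)
    (f : ℕ → Matrix (Fin d) (Fin d) ℂ) (hf : ∀ i : Fin m, f i = Q i) :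
    dlOp Q = ((List.range m).map fun j => 1 - f j).reverse.prod := by
  rw [dlOp, List.ofFn_eq_map, ← List.map_coe_finRange_eq_range, List.map_map]
  simp only [Function.comp_def, hf]

/-- Quantum union bound: for projectors Q₁,…,Q_m, H = ΣQᵢ, a unit vector ψ, and
φ = (I−Q_m)⋯(I−Q₁)ψ, we have ‖φ‖² ≥ 1 − 4⟨ψ|H|ψ⟩. -/
theorem quantum_union_bound {d m : ℕ}
    (Q : Fin m → Matrix (Fin d) (Fin d) ℂ)
    (hQp : ∀ i, Q i * Q i = Q i) (hQh : ∀ i, (Q i).IsHermitian)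
    (ψ : Fin d → ℂ) (hψ : star ψ ⬝ᵥ ψ = 1) :
    1 - 4 * ((star ψ ⬝ᵥ (∑ i, Q i).mulVec ψ).re) ≤
      ((star ((dlOp Q).mulVec ψ)) ⬝ᵥ ((dlOp Q).mulVec ψ)).re := by
  -- `0` is a projection too, so padding `Q` with zeros puts it in the `ℕ`-indexed setting.
  set f : ℕ → Matrix (Fin d) (Fin d) ℂ := fun j => if h : j < m then Q ⟨j, h⟩ else 0
  have hf (i : Fin m) : f i = Q i := dif_pos i.isLt
  have hP (j : ℕ) : (toEuclideanLin (f j)).IsSymmetricProjection := by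
    by_cases h : j < m
    · simpa only [f, dif_pos h] using isSymmetricProjection_toEuclideanLin (hQp _) (hQh _)
    · simpa only [f, dif_neg h] using isSymmetricProjection_toEuclideanLin
        IsIdempotentElem.zero isHermitian_zero
  have hH : ∑ i, Q i = ∑ j ∈ Finset.range m, f j := by
    simp only [← hf, Fin.sum_univ_eq_sum_range f m]
  have hψ' : ‖WithLp.toLp 2 ψ‖ ^ 2 = 1 := by
    rw [← inner_self_eq_norm_sq (𝕜 := ℂ), ← star_dotProduct_eq_inner_toLp, hψ, RCLike.one_re]
  have key := norm_sq_sub_four_mul_re_inner_le_norm_seqResidual_sq hP (WithLp.toLp 2 ψ) m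
  rw [hψ', ← toLp_list_prod_mulVec_eq_seqResidual, ← dlOp_eq_list_prod_range Q f hf,
    ← map_sum, toLpLin_toLp, toLin'_apply, ← hH, ← star_dotProduct_eq_inner_toLp,
    ← inner_self_eq_norm_sq (𝕜 := ℂ), ← star_dotProduct_eq_inner_toLp] at key
  exact key

end
end

section
/- Let ρ_AB be a density operator on a bipartite Hilbert space H_A ⊗ H_B with H_A ≅ H_B, and let the SWAP test be the measurement accepting with probability Tr(Π_sym ρ_AB) where Π_sym = (I + SWAP)/2 is the projector-shifted symmetrizer (more precisely, acceptance probability equals ½(1 + Tr(SWAP·ρ_AB))). Then the acceptance probability is at most ½(1 + F(ρ_A, ρ_B)), where ρ_A, ρ_B are the reduced states and F(σ₁,σ₂) = ‖√σ₁ √σ₂‖₁ is the fidelity. -/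
open Matrix Complex
open scoped ComplexOrder

noncomputable section

open Classical in
/-- The positive square root of a positive semidefinite matrix (0 if not PSD). -/
def psdSqrt {m : Type*} [Fintype m] [DecidableEq m] (M : Matrix m m ℂ) : Matrix m m ℂ :=
  if h : M.PosSemidef then
    h.1.eigenvectorUnitary.1 * diagonal ((↑) ∘ (√·) ∘ h.1.eigenvalues) *
      (star h.1.eigenvectorUnitary : Matrix m m ℂ)
  else 0

/-- Trace norm ‖M‖₁ = Tr√(M†M). -/
def traceNorm {m : Type*} [Fintype m] [DecidableEq m] (M : Matrix m m ℂ) : ℝ :=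
  ((psdSqrt (Mᴴ * M)).trace).re

/-- Fidelity F(σ₁,σ₂) = ‖√σ₁ √σ₂‖₁. -/
def fid {m : Type*} [Fintype m] [DecidableEq m] (a b : Matrix m m ℂ) : ℝ :=
  traceNorm (psdSqrt a * psdSqrt b)

/-- SWAP unitary on a bipartite system. -/
def swapMat (d : ℕ) : Matrix (Fin d × Fin d) (Fin d × Fin d) ℂ :=
  Matrix.of fun p q => if p.1 = q.2 ∧ p.2 = q.1 then 1 else 0

/-- Reduced state on the first factor, ρ_A = Tr_B ρ. -/
def redA {d : ℕ} (ρ : Matrix (Fin d × Fin d) (Fin d × Fin d) ℂ) : Matrix (Fin d) (Fin d) ℂ :=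
  Matrix.of fun i k => ∑ j, ρ (i, j) (k, j)

/-- Reduced state on the second factor, ρ_B = Tr_A ρ. -/
def redB {d : ℕ} (ρ : Matrix (Fin d × Fin d) (Fin d × Fin d) ℂ) : Matrix (Fin d) (Fin d) ℂ :=
  Matrix.of fun j l => ∑ i, ρ (i, j) (i, l)

/-!
Write `ρ = Sᴴ S` and cut every row of `S`, a vector on `Fin d × Fin d`, into a `d × d` block.
Stacking these blocks gives `T` with `ρ_B = Tᴴ T`; doing the same after exchanging the two tensor
factors gives `Gᴴ` with `ρ_A = G Gᴴ`, and then `Tr(SWAP ρ) = Tr(G T)`. By polar decomposition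
`G = √ρ_A X` and `T = Yᴴ √ρ_B` with contractions `X`, `Y`, so `Tr(G T) = Tr(√ρ_A (X Yᴴ) √ρ_B)`,
whose real part is at most `‖√ρ_A √ρ_B‖₁` by the duality between the trace norm and the
operator norm.
-/

section

open scoped Matrix.Norms.L2Operator MatrixOrder

variable {n k : Type*} [Fintype n] [DecidableEq n] [Fintype k] [DecidableEq k]

lemma Matrix.PosSemidef.exists_eq_conjTranspose_mul_self {M : Matrix n n ℂ}
    (h : M.PosSemidef) : ∃ S : Matrix n n ℂ, M = Sᴴ * S :=
  CStarAlgebra.nonneg_iff_eq_star_mul_self.mp h.nonneg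

lemma Matrix.IsHermitian.exists_norm_le_one_eq_mul {A : Matrix n n ℂ} (hA : A.IsHermitian)
    {G : Matrix n k ℂ} (hG : A * A = G * Gᴴ) : ∃ X : Matrix n k ℂ, ‖X‖ ≤ 1 ∧ G = A * X := by
  have hcont (f : ℝ → ℝ) : ContinuousOn f (spectrum ℝ A) := finite_real_spectrum.continuousOn f
  -- the Moore–Penrose inverse of `A`, as `(0 : ℝ)⁻¹ = 0`
  set A' := cfc (·⁻¹ : ℝ → ℝ) A
  have hA' : A'ᴴ = A' := IsSelfAdjoint.star_eq (cfc_predicate _ A)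
  have hP : cfc (fun x : ℝ => x * x⁻¹) A = A * A' := by
    rw [cfc_mul (fun x : ℝ => x) (·⁻¹) A (hcont _) (hcont _), cfc_id' ℝ A]
  have hAPA : A * A' * A = A :=
    calc A * A' * A = cfc (fun x : ℝ => x * x⁻¹ * x) A := by
          rw [cfc_mul (fun x : ℝ => x * x⁻¹) (fun x => x) A (hcont _) (hcont _), hP, cfc_id' ℝ A]
      _ = cfc (fun x : ℝ => x) A := cfc_congr fun x _ => mul_inv_mul_cancel x
      _ = A := cfc_id' ℝ A
  have hPnorm : ‖A * A'‖ ≤ 1 := by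
    rw [← hP]
    refine norm_cfc_le zero_le_one fun x _ => ?_
    by_cases hx : x = 0 <;> simp [hx]
  refine ⟨A' * G, ?_, ?_⟩
  · have hsq : (A' * G)ᴴᴴ * (A' * G)ᴴ = (A * A')ᴴ * (A * A') := by
      rw [conjTranspose_conjTranspose, conjTranspose_mul, conjTranspose_mul, hA', hA.eq,
        Matrix.mul_assoc, ← Matrix.mul_assoc G, ← hG]
      noncomm_ring
    have h : ‖A' * G‖ * ‖A' * G‖ = ‖A * A'‖ * ‖A * A'‖ := by
      rw [← l2_opNorm_conjTranspose (A' * G), ← l2_opNorm_conjTranspose_mul_self,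
        ← l2_opNorm_conjTranspose_mul_self, hsq]
    exact (mul_self_inj (norm_nonneg _) (norm_nonneg _) |>.mp h).trans_le hPnorm
  · set P := 1 - A * A'
    have hY : G - A * (A' * G) = P * G := by
      rw [← Matrix.mul_assoc, Matrix.sub_mul, Matrix.one_mul]
    have h : (P * G) * (P * G)ᴴ = (A - A * A' * A) * (A - A * A' * A) := by
      rw [conjTranspose_mul, Matrix.mul_assoc, ← Matrix.mul_assoc G, ← hG]
      simp only [P, conjTranspose_sub, conjTranspose_one, conjTranspose_mul, hA', hA.eq]
      noncomm_ring
    rw [hAPA, sub_self, zero_mul, self_mul_conjTranspose_eq_zero, ← hY, sub_eq_zero] at h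
    exact h

lemma Matrix.norm_mul_conjTranspose_le_one {X Y : Matrix n k ℂ} (hX : ‖X‖ ≤ 1)
    (hY : ‖Y‖ ≤ 1) : ‖X * Yᴴ‖ ≤ 1 :=
  (l2_opNorm_mul X Yᴴ).trans <| by
    rw [l2_opNorm_conjTranspose]; nlinarith [norm_nonneg X, norm_nonneg Y]

lemma Matrix.re_star_dotProduct_mulVec_le {C : Matrix n n ℂ} (hC : ‖C‖ ≤ 1) (v : n → ℂ) :
    (star v ⬝ᵥ C *ᵥ v).re ≤ (star v ⬝ᵥ v).re := by
  set x : EuclideanSpace ℂ n := WithLp.toLp 2 v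
  have hx : (star v ⬝ᵥ v).re = ‖x‖ ^ 2 := by
    rw [← inner_self_eq_norm_sq (𝕜 := ℂ), EuclideanSpace.inner_toLp_toLp, dotProduct_comm]
    rfl
  calc (star v ⬝ᵥ C *ᵥ v).re ≤ ‖inner ℂ x (WithLp.toLp 2 (C *ᵥ v))‖ := by
        rw [EuclideanSpace.inner_toLp_toLp, dotProduct_comm]
        exact Complex.re_le_norm _
    _ ≤ ‖x‖ * (‖C‖ * ‖x‖) :=
        (norm_inner_le_norm _ _).trans (by gcongr; exact l2_opNorm_mulVec C x)
    _ ≤ (star v ⬝ᵥ v).re := by rw [hx]; nlinarith [norm_nonneg x, norm_nonneg C]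

lemma Matrix.PosSemidef.re_trace_mul_le {H C : Matrix n n ℂ} (hH : H.PosSemidef)
    (hC : ‖C‖ ≤ 1) : (H * C).trace.re ≤ H.trace.re := by
  obtain ⟨R, rfl⟩ := hH.exists_eq_conjTranspose_mul_self
  have hdiag (M : Matrix n n ℂ) (i : n) :
      (R * M * Rᴴ) i i = star (fun a => Rᴴ a i) ⬝ᵥ M *ᵥ fun a => Rᴴ a i := by
    simp only [mul_apply, dotProduct, mulVec, Finset.sum_mul, conjTranspose_apply, Pi.star_apply,
      star_star]
    rw [Finset.sum_comm]
    simp only [Finset.mul_sum, mul_assoc]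
  have key : (R * C * Rᴴ).trace.re ≤ (R * 1 * Rᴴ).trace.re := by
    simp only [trace, diag, Complex.re_sum, hdiag, one_mulVec]
    exact Finset.sum_le_sum fun i _ => re_star_dotProduct_mulVec_le hC _
  rwa [mul_one, trace_mul_comm, ← mul_assoc, trace_mul_comm R] at key

lemma psdSqrt_eq_sqrt {M : Matrix n n ℂ} (h : M.PosSemidef) : psdSqrt M = CFC.sqrt M := by
  rw [CFC.sqrt_eq_real_sqrt M h.nonneg, cfcₙ_eq_cfc, h.1.cfc_eq, IsHermitian.cfc, psdSqrt,
    dif_pos h, Unitary.conjStarAlgAut_apply]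
  rfl

lemma Matrix.PosSemidef.psdSqrt {M : Matrix n n ℂ} (h : M.PosSemidef) :
    (psdSqrt M).PosSemidef := by
  rw [psdSqrt_eq_sqrt h, ← nonneg_iff_posSemidef]
  exact CFC.sqrt_nonneg M

lemma psdSqrt_mul_self {M : Matrix n n ℂ} (h : M.PosSemidef) : psdSqrt M * psdSqrt M = M := by
  rw [psdSqrt_eq_sqrt h]
  exact CFC.sqrt_mul_sqrt_self M h.nonneg

lemma re_trace_mul_le_traceNorm (N : Matrix n n ℂ) {W : Matrix n n ℂ} (hW : ‖W‖ ≤ 1) :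
    (N * W).trace.re ≤ traceNorm N := by
  have hNN := posSemidef_conjTranspose_mul_self N
  set H := psdSqrt (Nᴴ * N)
  obtain ⟨X, hX, hNX⟩ := hNN.psdSqrt.1.exists_norm_le_one_eq_mul
    (by rw [psdSqrt_mul_self hNN, conjTranspose_conjTranspose] : H * H = Nᴴ * Nᴴᴴ)
  have hN : N = Xᴴ * H := by
    simpa only [conjTranspose_conjTranspose, conjTranspose_mul, hNN.psdSqrt.1.eq]
      using congrArg conjTranspose hNX
  calc (N * W).trace.re = (H * (W * Xᴴ)).trace.re := by
        rw [hN, Matrix.mul_assoc, trace_mul_comm, Matrix.mul_assoc]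
    _ ≤ traceNorm N := hNN.psdSqrt.re_trace_mul_le (norm_mul_conjTranspose_le_one hW hX)

lemma re_trace_mul_mul_le_traceNorm {A B M : Matrix n n ℂ} (hA : A.IsHermitian)
    (hB : B.IsHermitian) (hM : ‖M‖ ≤ 1) : (A * M * B).trace.re ≤ traceNorm (A * B) :=
  calc (A * M * B).trace.re = (A * B * Mᴴ)ᴴ.trace.re := by
        rw [conjTranspose_mul, conjTranspose_mul, hA.eq, hB.eq, conjTranspose_conjTranspose,
          Matrix.mul_assoc, trace_mul_comm, Matrix.mul_assoc]
    _ = (A * B * Mᴴ).trace.re := by rw [trace_conjTranspose, Complex.star_def, Complex.conj_re]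
    _ ≤ traceNorm (A * B) := re_trace_mul_le_traceNorm _ (by rwa [l2_opNorm_conjTranspose])

lemma re_trace_mul_le_fid (G : Matrix n k ℂ) (T : Matrix k n ℂ) :
    (G * T).trace.re ≤ fid (G * Gᴴ) (Tᴴ * T) := by
  have hA := posSemidef_self_mul_conjTranspose G
  have hB := posSemidef_conjTranspose_mul_self T
  obtain ⟨X, hX, hGX⟩ := hA.psdSqrt.1.exists_norm_le_one_eq_mul (psdSqrt_mul_self hA)
  obtain ⟨Y, hY, hTY⟩ := hB.psdSqrt.1.exists_norm_le_one_eq_mul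
    (by rw [psdSqrt_mul_self hB, conjTranspose_conjTranspose] : _ = Tᴴ * Tᴴᴴ)
  have hT : T = Yᴴ * psdSqrt (Tᴴ * T) := by
    simpa only [conjTranspose_conjTranspose, conjTranspose_mul, hB.psdSqrt.1.eq]
      using congrArg conjTranspose hTY
  have hGT : G * T = psdSqrt (G * Gᴴ) * (X * Yᴴ) * psdSqrt (Tᴴ * T) := by
    conv_lhs => rw [hGX, hT]
    simp only [Matrix.mul_assoc]
  rw [hGT]
  exact re_trace_mul_mul_le_traceNorm hA.psdSqrt.1 hB.psdSqrt.1
    (norm_mul_conjTranspose_le_one hX hY)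

end

def reshapeRows {Z m n : Type*} (S : Matrix Z (m × n) ℂ) : Matrix (Z × m) n ℂ :=
  Matrix.of fun p j => S p.1 (p.2, j)

section

variable {d : ℕ} {Z : Type*} [Fintype Z]

lemma redB_conjTranspose_mul_self (S : Matrix Z (Fin d × Fin d) ℂ) :
    redB (Sᴴ * S) = (reshapeRows S)ᴴ * reshapeRows S := by
  ext j l
  simp only [redB, reshapeRows, of_apply, mul_apply, conjTranspose_apply, Fintype.sum_prod_type]
  exact Finset.sum_comm

lemma redA_conjTranspose_mul_self (S : Matrix Z (Fin d × Fin d) ℂ) :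
    redA (Sᴴ * S) = (reshapeRows (S.submatrix id Prod.swap))ᴴ *
      reshapeRows (S.submatrix id Prod.swap) := by
  ext i k
  simp only [redA, reshapeRows, of_apply, mul_apply, conjTranspose_apply, submatrix_apply, id,
    Prod.swap_prod_mk, Fintype.sum_prod_type]
  exact Finset.sum_comm

lemma trace_swapMat_mul (ρ : Matrix (Fin d × Fin d) (Fin d × Fin d) ℂ) :
    (swapMat d * ρ).trace = ∑ i, ∑ j, ρ (j, i) (i, j) := by
  simp only [trace, diag, swapMat, mul_apply, of_apply, Fintype.sum_prod_type, ite_mul, one_mul,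
    zero_mul, ite_and, Finset.sum_ite_eq, Finset.mem_univ, if_true]

lemma trace_swapMat_mul_conjTranspose_mul_self (S : Matrix Z (Fin d × Fin d) ℂ) :
    (swapMat d * (Sᴴ * S)).trace =
      ((reshapeRows (S.submatrix id Prod.swap))ᴴ * reshapeRows S).trace := by
  rw [trace_swapMat_mul]
  simp only [trace, diag, reshapeRows, mul_apply, of_apply, conjTranspose_apply,
    submatrix_apply, id, Prod.swap_prod_mk, Fintype.sum_prod_type]
  rw [Finset.sum_comm]
  exact Finset.sum_congr rfl fun _ _ => Finset.sum_comm

end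

theorem swap_test_bound_general {d : ℕ}
    (ρ : Matrix (Fin d × Fin d) (Fin d × Fin d) ℂ)
    (hρ : ρ.PosSemidef) :
    (1 / 2 : ℝ) * (1 + ((swapMat d * ρ).trace).re)
      ≤ (1 / 2) * (1 + fid (redA ρ) (redB ρ)) := by
  obtain ⟨S, rfl⟩ := hρ.exists_eq_conjTranspose_mul_self
  have h := re_trace_mul_le_fid (reshapeRows (S.submatrix id Prod.swap))ᴴ (reshapeRows S)
  rw [← redB_conjTranspose_mul_self, conjTranspose_conjTranspose, ← redA_conjTranspose_mul_self,
    ← trace_swapMat_mul_conjTranspose_mul_self] at h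
  linarith

/-- SWAP test bound: the acceptance probability ½(1+Tr(SWAP·ρ)) is at most ½(1+F(ρ_A,ρ_B)). -/
theorem swap_test_bound {d : ℕ}
    (ρ : Matrix (Fin d × Fin d) (Fin d × Fin d) ℂ)
    (hρ : ρ.PosSemidef) (htr : ρ.trace = 1) :
    (1 / 2 : ℝ) * (1 + ((swapMat d * ρ).trace).re)
      ≤ (1 / 2) * (1 + fid (redA ρ) (redB ρ)) :=
  swap_test_bound_general ρ hρ

end
end
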